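/- For the ensemble |φ₀⟩=|00⟩, |φ₁⟩=|01⟩, |φ₊⟩=|+⟩⊗|+⟩, |φ₋⟩=|−⟩⊗|−⟩ with priors η₀=η₁=γ/(2(1+γ)), η₊=η₋=1/(2(1+γ)), γ≥2: the POVM M₊=|1⟩⟨1|⊗|+⟩⟨+|, M₋=|1⟩⟨1|⊗|−⟩⟨−|, M₀=M₁=0, M_?=|0⟩⟨0|⊗𝟙 is an unambiguous measurement (Tr(|φⱼ⟩⟨φⱼ|Mᵢ)=0 for i≠j) whose success probability equals 1/(2(1+γ)). -/

import Mathlib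

open Matrix Complex
open scoped Matrix Kronecker ComplexOrder

noncomputable section

abbrev Q2 := Fin 2 → ℂ
abbrev V4 := Fin 2 × Fin 2 → ℂ
abbrev Op2 := Matrix (Fin 2) (Fin 2) ℂ
abbrev Op4 := Matrix (Fin 2 × Fin 2) (Fin 2 × Fin 2) ℂ

def ket0 : Q2 := ![1, 0]
def ket1 : Q2 := ![0, 1]
def ketP : Q2 := (Real.sqrt 2 : ℂ)⁻¹ • (ket0 + ket1)
def ketM : Q2 := (Real.sqrt 2 : ℂ)⁻¹ • (ket0 - ket1)

/-- tensor product of two qubit vectors -/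
def tens (a b : Q2) : V4 := fun p => a p.1 * b p.2

/-- rank-one projector |v⟩⟨v| on one qubit -/
def proj2 (v : Q2) : Op2 := Matrix.of fun i j => v i * star (v j)

/-- rank-one operator |v⟩⟨v| on two qubits -/
def proj (v : V4) : Op4 := Matrix.of fun i j => v i * star (v j)

/-- inner product ⟨u|v⟩ -/
def ip4 (u v : V4) : ℂ := star u ⬝ᵥ v

/-- expectation value ⟨u|M|u⟩ -/
def expVal (u : V4) (M : Op4) : ℂ := star u ⬝ᵥ (M *ᵥ u)

-- Bell states
def PhiP : V4 := (Real.sqrt 2 : ℂ)⁻¹ • (tens ket0 ket0 + tens ket1 ket1)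
def PhiM : V4 := (Real.sqrt 2 : ℂ)⁻¹ • (tens ket0 ket0 - tens ket1 ket1)
def PsiP : V4 := (Real.sqrt 2 : ℂ)⁻¹ • (tens ket0 ket1 + tens ket1 ket0)
def PsiM : V4 := (Real.sqrt 2 : ℂ)⁻¹ • (tens ket0 ket1 - tens ket1 ket0)

-- Example 1 states
def φ0 : V4 := tens ket0 ket0
def φ1 : V4 := tens ket0 ket1
def φP : V4 := tens ketP ketP
def φM : V4 := tens ketM ketM

-- Example 1 reciprocal vectors
def φt0 : V4 := (Real.sqrt 2 : ℂ) • PhiM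
def φt1 : V4 := (Real.sqrt 2 : ℂ) • PsiM
def φtP : V4 := (Real.sqrt 2 : ℂ) • tens ket1 ketP
def φtM : V4 := -((Real.sqrt 2 : ℂ) • tens ket1 ketM)

-- Example 2 states
def ψ0 : V4 := tens ket0 ket0
def ψ1 : V4 := tens ket0 ket1
def ψP : V4 := tens ketP ketP
def ψM : V4 := tens ketP ketM

-- Example 2 reciprocal vectors
def ψt0 : V4 := (Real.sqrt 2 : ℂ) • tens ketM ket0
def ψt1 : V4 := (Real.sqrt 2 : ℂ) • tens ketM ket1
def ψtP : V4 := (Real.sqrt 2 : ℂ) • tens ket1 ketP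
def ψtM : V4 := (Real.sqrt 2 : ℂ) • tens ket1 ketM

/-- prior probabilities η₀=η₁=γ/(2(1+γ)), η₊=η₋=1/(2(1+γ)) -/
def η (γ : ℝ) : Fin 4 → ℝ :=
  ![γ / (2 * (1 + γ)), γ / (2 * (1 + γ)), 1 / (2 * (1 + γ)), 1 / (2 * (1 + γ))]

/-! Every POVM element is a product of rank-one qubit projectors, so
`⟨a ⊗ b| P_c ⊗ P_d |a ⊗ b⟩ = |⟨c|a⟩|² |⟨d|b⟩|²`. Unambiguity then reduces to `⟨1|0⟩ = ⟨+|−⟩ = 0`,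
completeness to the resolutions of the identity `P_0 + P_1 = P_+ + P_− = 1`, and the success
probability to `|⟨1|±⟩|² = 1/2`, which halves the prior weight `η₊ + η₋ = 1/(1+γ)`. -/

lemma proj2_eq_vecMulVec (v : Q2) : proj2 v = vecMulVec v (star v) := rfl

lemma proj2_posSemidef (v : Q2) : (proj2 v).PosSemidef :=
  posSemidef_vecMulVec_self_star v

lemma star_dotProduct_proj2_mulVec (c a : Q2) :
    star a ⬝ᵥ (proj2 c *ᵥ a) = normSq (star c ⬝ᵥ a) := by
  rw [proj2_eq_vecMulVec, vecMulVec_mulVec, op_smul_eq_smul, dotProduct_smul, smul_eq_mul,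
    normSq_eq_conj_mul_self, mul_comm, ← star_def, star_dotProduct]

lemma expVal_tens_kronecker (a b : Q2) (A B : Op2) :
    expVal (tens a b) (A ⊗ₖ B) = (star a ⬝ᵥ (A *ᵥ a)) * (star b ⬝ᵥ (B *ᵥ b)) := by
  simp only [expVal, dotProduct, mulVec, tens, kroneckerMap_apply, Pi.star_apply, star_mul',
    Fintype.sum_prod_type, Fin.sum_univ_two]
  ring

lemma proj2_ket0_add_proj2_ket1 : proj2 ket0 + proj2 ket1 = 1 := by
  ext i j
  fin_cases i <;> fin_cases j <;> simp [proj2, ket0, ket1]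

lemma ofReal_sqrt_two_inv_mul_self : (Real.sqrt 2 : ℂ)⁻¹ * (Real.sqrt 2 : ℂ)⁻¹ = 2⁻¹ := by
  rw [← mul_inv, ← ofReal_mul, Real.mul_self_sqrt zero_le_two, ofReal_ofNat]

lemma proj2_ketP_add_proj2_ketM : proj2 ketP + proj2 ketM = 1 := by
  ext i j
  fin_cases i <;> fin_cases j <;>
    norm_num [proj2, ketP, ketM, ket0, ket1, ← mul_assoc, ofReal_sqrt_two_inv_mul_self]

lemma expVal_zero (u : V4) : expVal u 0 = 0 := by
  simp [expVal]

lemma expVal_tens_kronecker_proj2 (a b c d : Q2) :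
    expVal (tens a b) (proj2 c ⊗ₖ proj2 d) =
      ((normSq (star c ⬝ᵥ a) * normSq (star d ⬝ᵥ b) : ℝ) : ℂ) := by
  rw [expVal_tens_kronecker, star_dotProduct_proj2_mulVec, star_dotProduct_proj2_mulVec,
    ofReal_mul]

lemma star_ket1_dotProduct_ket0 : star ket1 ⬝ᵥ ket0 = 0 := by
  simp [ket0, ket1, dotProduct]

lemma star_ketP_dotProduct_ketM : star ketP ⬝ᵥ ketM = 0 := by
  simp [ketP, ketM, ket0, ket1, dotProduct]

lemma star_ketM_dotProduct_ketP : star ketM ⬝ᵥ ketP = 0 := by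
  simp [ketP, ketM, ket0, ket1, dotProduct]

lemma normSq_star_ket1_dotProduct_ketP : normSq (star ket1 ⬝ᵥ ketP) = 1 / 2 := by
  simp [ketP, ket0, ket1, dotProduct]

lemma normSq_star_ket1_dotProduct_ketM : normSq (star ket1 ⬝ᵥ ketM) = 1 / 2 := by
  simp [ketM, ket0, ket1, dotProduct]

lemma star_ketP_dotProduct_ketP : star ketP ⬝ᵥ ketP = 1 := by
  norm_num [ketP, ket0, ket1, dotProduct, ofReal_sqrt_two_inv_mul_self]

lemma star_ketM_dotProduct_ketM : star ketM ⬝ᵥ ketM = 1 := by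
  norm_num [ketM, ket0, ket1, dotProduct, ofReal_sqrt_two_inv_mul_self]

theorem stmt_7_general (γ : ℝ) :
    (proj2 ket1 ⊗ₖ proj2 ketP).PosSemidef ∧
    (proj2 ket1 ⊗ₖ proj2 ketM).PosSemidef ∧
    (proj2 ket0 ⊗ₖ (1 : Op2)).PosSemidef ∧
    (0 : Op4) + 0 + proj2 ket1 ⊗ₖ proj2 ketP + proj2 ket1 ⊗ₖ proj2 ketM
      + proj2 ket0 ⊗ₖ (1 : Op2) = 1 ∧
    (∀ i j : Fin 4, i ≠ j →
      expVal (![φ0, φ1, φP, φM] j)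
        (![0, 0, proj2 ket1 ⊗ₖ proj2 ketP, proj2 ket1 ⊗ₖ proj2 ketM] i) = 0) ∧
    (∑ i : Fin 4, ((η γ i : ℝ) : ℂ) *
        expVal (![φ0, φ1, φP, φM] i)
          (![0, 0, proj2 ket1 ⊗ₖ proj2 ketP, proj2 ket1 ⊗ₖ proj2 ketM] i))
      = ((1 / (2 * (1 + γ)) : ℝ) : ℂ) := by
  refine ⟨(proj2_posSemidef _).kronecker (proj2_posSemidef _),
    (proj2_posSemidef _).kronecker (proj2_posSemidef _),
    (proj2_posSemidef _).kronecker PosSemidef.one, ?_, ?_, ?_⟩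
  · rw [zero_add, zero_add, ← kronecker_add, proj2_ketP_add_proj2_ketM,
      add_comm (proj2 ket1 ⊗ₖ 1), ← add_kronecker, proj2_ket0_add_proj2_ket1, one_kronecker_one]
  · intro i j hij
    fin_cases i <;> fin_cases j <;>
      simp_all [φ0, φ1, φP, φM, expVal_zero, expVal_tens_kronecker_proj2,
        star_ket1_dotProduct_ket0, star_ketP_dotProduct_ketM, star_ketM_dotProduct_ketP,
        -vec2_dotProduct]
  · simp only [Fin.sum_univ_four, η, φP, φM, cons_val_zero, cons_val_one, cons_val, expVal_zero,
      expVal_tens_kronecker_proj2, normSq_star_ket1_dotProduct_ketP,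
      normSq_star_ket1_dotProduct_ketM, star_ketP_dotProduct_ketP, star_ketM_dotProduct_ketM,
      map_one]
    push_cast
    ring

/-- the LOCC-implementable POVM M₊=|1⟩⟨1|⊗|+⟩⟨+|, M₋=|1⟩⟨1|⊗|−⟩⟨−|,
M₀=M₁=0, M_?=|0⟩⟨0|⊗𝟙 is unambiguous for Example 1 with success probability 1/(2(1+γ)). -/
theorem stmt_7 (γ : ℝ) (hγ : 2 ≤ γ) :
    (proj2 ket1 ⊗ₖ proj2 ketP).PosSemidef ∧
    (proj2 ket1 ⊗ₖ proj2 ketM).PosSemidef ∧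
    (proj2 ket0 ⊗ₖ (1 : Op2)).PosSemidef ∧
    (0 : Op4) + 0 + proj2 ket1 ⊗ₖ proj2 ketP + proj2 ket1 ⊗ₖ proj2 ketM
      + proj2 ket0 ⊗ₖ (1 : Op2) = 1 ∧
    (∀ i j : Fin 4, i ≠ j →
      expVal (![φ0, φ1, φP, φM] j)
        (![0, 0, proj2 ket1 ⊗ₖ proj2 ketP, proj2 ket1 ⊗ₖ proj2 ketM] i) = 0) ∧
    (∑ i : Fin 4, ((η γ i : ℝ) : ℂ) *
        expVal (![φ0, φ1, φP, φM] i)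
          (![0, 0, proj2 ket1 ⊗ₖ proj2 ketP, proj2 ket1 ⊗ₖ proj2 ketM] i))
      = ((1 / (2 * (1 + γ)) : ℝ) : ℂ) :=
  stmt_7_general γ
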